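/- arXiv:2601.04041 — 12 statements merged into one kernel-verified Lean document; each statement's English description precedes it below -/
import Mathlib

section
/- If G is a k×n matrix over F_q satisfying the t-all-symbol batch property, then the matrix obtained from G by deleting any single column satisfies the (t-1)-all-symbol batch property. -/
open Matrix

/-- `G` serves the list of vectors `v` (indexed by `ι`) if there are pairwise disjoint
recovery sets `R i` of column indices with `v i` in the span of the columns indexed by `R i`. -/
def Serves (F : Type*) [Field F] {m n ι : Type*} (G : Matrix m n F) (v : ι → (m → F)) : Prop :=
  ∃ R : ι → Set n, (Pairwise fun a b => Disjoint (R a) (R b)) ∧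
    ∀ i, v i ∈ Submodule.span F ((fun j a => G a j) '' R i)

/-- the `t`-all-symbol PIR property. -/
def ASPIR (F : Type*) [Field F] {m n : Type*} (t : ℕ) (G : Matrix m n F) : Prop :=
  ∀ j : n, Serves F G fun _ : Fin t => fun a => G a j

/-- the `t`-all-symbol batch property. -/
def ASBatch (F : Type*) [Field F] {m n : Type*} (t : ℕ) (G : Matrix m n F) : Prop :=
  ∀ c : Fin t → n, Serves F G fun i => fun a => G a (c i)

theorem stmt1 {F : Type*} [Field F] {k n t : ℕ} (ht : 1 ≤ t) (hn : 1 ≤ n)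
    (G : Matrix (Fin k) (Fin (n + 1)) F) (hG : ASBatch F (t + 1) G) (j0 : Fin (n + 1)) :
    ASBatch F t (G.submatrix id j0.succAbove) := by
  classical
  intro c
  obtain ⟨R, hdisj, hspan⟩ := hG (Fin.snoc (fun i => j0.succAbove (c i)) j0)
  set col : Fin (n + 1) → (Fin k → F) := fun j a => G a j with hcol
  set R' : Fin t → Set (Fin (n + 1)) := fun i =>
    (R i.castSucc \ {j0}) ∪ (if j0 ∈ R i.castSucc then R (Fin.last t) else ∅) with hR'
  have hne : ∀ i : Fin t, i.castSucc ≠ Fin.last t := fun i => (Fin.castSucc_lt_last i).ne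
  have hj0R' : ∀ i, j0 ∉ R' i := by
    intro i hmem
    rcases hmem with h | h
    · exact h.2 rfl
    · split_ifs at h with hc
      · exact Set.disjoint_left.mp (hdisj (hne i)) hc h
      · exact h
  have hspan' : ∀ i : Fin t,
      col (j0.succAbove (c i)) ∈ Submodule.span F (col '' R' i) := by
    intro i
    have h1 := hspan i.castSucc
    simp only [Fin.snoc_castSucc] at h1
    have h2 := hspan (Fin.last t)
    simp only [Fin.snoc_last] at h2
    have hle : Submodule.span F (col '' R i.castSucc) ≤ Submodule.span F (col '' R' i) := by
      rw [Submodule.span_le]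
      rintro _ ⟨j, hj, rfl⟩
      by_cases hjj : j = j0
      · subst hjj
        have : Submodule.span F (col '' R (Fin.last t)) ≤ Submodule.span F (col '' R' i) := by
          apply Submodule.span_mono
          apply Set.image_mono
          intro x hx
          exact Or.inr (by simp [hR', hj, hx])
        exact this h2
      · exact Submodule.subset_span ⟨j, Or.inl ⟨hj, hjj⟩, rfl⟩
    exact hle h1
  refine ⟨fun i => j0.succAbove ⁻¹' R' i, ?_, ?_⟩
  · intro a b hab
    apply Disjoint.preimage
    rw [Set.disjoint_left]
    rintro x (hx | hx) (hy | hy)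
    · exact Set.disjoint_left.mp
        (hdisj (fun h => hab (Fin.castSucc_injective t h))) hx.1 hy.1
    · split_ifs at hy with hc
      · exact Set.disjoint_left.mp (hdisj (hne a)) hx.1 hy
      · exact hy
    · split_ifs at hx with hc
      · exact Set.disjoint_left.mp (hdisj (hne b)) hy.1 hx
      · exact hx
    · split_ifs at hx with hc1
      · split_ifs at hy with hc2
        · exact Set.disjoint_left.mp
            (hdisj (fun h => hab (Fin.castSucc_injective t h))) hc1 hc2
        · exact hy
      · exact hx
  · intro i
    have himg : (fun j a => G.submatrix id j0.succAbove a j) '' (j0.succAbove ⁻¹' R' i)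
        = col '' R' i := by
      have : (fun (j : Fin n) (a : Fin k) => G.submatrix id j0.succAbove a j)
          = col ∘ j0.succAbove := rfl
      have heq : R' i ∩ {j0}ᶜ = R' i := by
        rw [Set.inter_eq_left]
        intro x hx
        simp only [Set.mem_compl_iff, Set.mem_singleton_iff]
        rintro rfl
        exact hj0R' i hx
      rw [this, Set.image_comp, Set.image_preimage_eq_inter_range, Fin.range_succAbove, heq]
    rw [himg]
    exact hspan' i
end

section
/- If A ∈ F_q^{k_1×n_1} satisfies the t-all-symbol batch property and B ∈ F_q^{k_2×n_2} satisfies the t-all-symbol batch property, then the block-diagonal matrix [[A,0],[0,B]] of size (k_1+k_2)×(n_1+n_2) satisfies the t-all-symbol batch property. -/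
open Matrix

section Aux
variable {F : Type*} [Field F] {k₁ k₂ n₁ n₂ : ℕ}

/-- extend a vector on the left block by zero -/
def extL (F : Type*) [Field F] (k₁ k₂ : ℕ) : (Fin k₁ → F) →ₗ[F] (Fin k₁ ⊕ Fin k₂ → F) where
  toFun w := Sum.elim w 0
  map_add' := by intros; ext x; cases x <;> simp
  map_smul' := by intros; ext x; cases x <;> simp

def extR (F : Type*) [Field F] (k₁ k₂ : ℕ) : (Fin k₂ → F) →ₗ[F] (Fin k₁ ⊕ Fin k₂ → F) where
  toFun w := Sum.elim 0 w
  map_add' := by intros; ext x; cases x <;> simp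
  map_smul' := by intros; ext x; cases x <;> simp

lemma span_extL (A : Matrix (Fin k₁) (Fin n₁) F) (S : Set (Fin n₁)) (v : Fin k₁ → F)
    (hv : v ∈ Submodule.span F ((fun j a => A a j) '' S)) :
    (Sum.elim v 0 : Fin k₁ ⊕ Fin k₂ → F) ∈
      Submodule.span F ((fun j (a : Fin k₁ ⊕ Fin k₂) => Sum.elim (fun b => A b j) (0 : Fin k₂ → F) a) '' S) := by
  have h := Submodule.mem_map_of_mem (f := extL F k₁ k₂) hv
  rw [Submodule.map_span, ← Set.image_comp] at h
  exact h

lemma span_extR (B : Matrix (Fin k₂) (Fin n₂) F) (S : Set (Fin n₂)) (v : Fin k₂ → F)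
    (hv : v ∈ Submodule.span F ((fun j a => B a j) '' S)) :
    (Sum.elim 0 v : Fin k₁ ⊕ Fin k₂ → F) ∈
      Submodule.span F ((fun j (a : Fin k₁ ⊕ Fin k₂) => Sum.elim (0 : Fin k₁ → F) (fun b => B b j) a) '' S) := by
  have h := Submodule.mem_map_of_mem (f := extR F k₁ k₂) hv
  rw [Submodule.map_span, ← Set.image_comp] at h
  exact h

end Aux

theorem stmt2 {F : Type*} [Field F] {k₁ k₂ n₁ n₂ t : ℕ}
    (A : Matrix (Fin k₁) (Fin n₁) F) (B : Matrix (Fin k₂) (Fin n₂) F)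
    (hA : ASBatch F t A) (hB : ASBatch F t B) :
    ASBatch F t (Matrix.fromBlocks A 0 0 B) := by
  classical
  intro c
  set G := Matrix.fromBlocks A 0 0 B with hG
  have hcolsL : (fun (x : Fin n₁) (a : Fin k₁ ⊕ Fin k₂) => G a (Sum.inl x))
      = fun x => Sum.elim (fun b => A b x) (0 : Fin k₂ → F) := by
    ext x a; cases a <;> simp [hG]
  have hcolsR : (fun (x : Fin n₂) (a : Fin k₁ ⊕ Fin k₂) => G a (Sum.inr x))
      = fun x => Sum.elim (0 : Fin k₁ → F) (fun b => B b x) := by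
    ext x a; cases a <;> simp [hG]
  by_cases hL : ∃ j : Fin n₁, ∃ i, c i = Sum.inl j
  case neg =>
    by_cases hR : ∃ j : Fin n₂, ∃ i, c i = Sum.inr j
    case neg =>
      refine ⟨fun _ => ∅, fun a b _ => by simp, fun i => ?_⟩
      cases h : c i with
      | inl j => exact absurd ⟨j, i, h⟩ hL
      | inr j => exact absurd ⟨j, i, h⟩ hR
    case pos =>
      obtain ⟨j₀, -⟩ := hR
      set c₂ : Fin t → Fin n₂ := fun i => Sum.elim (fun _ => j₀) id (c i) with hc₂
      obtain ⟨R₂, hdisj, hspan⟩ := hB c₂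
      refine ⟨fun i => Sum.inr '' R₂ i, ?_, fun i => ?_⟩
      · intro a b hab
        exact Set.disjoint_image_of_injective Sum.inr_injective (hdisj hab)
      · cases h : c i with
        | inl j => exact absurd ⟨j, i, h⟩ hL
        | inr j =>
          have hv : (fun a => B a j) ∈ Submodule.span F ((fun j a => B a j) '' R₂ i) := by
            simpa [hc₂, h] using hspan i
          simp only [h]
          rw [Set.image_image, hcolsR]
          have hcol : (fun a => G a (Sum.inr j))
              = Sum.elim (0 : Fin k₁ → F) (fun b => B b j) := congrFun hcolsR j
          rw [hcol]
          exact span_extR B (R₂ i) _ hv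
  case pos =>
    obtain ⟨j₁, -⟩ := hL
    set c₁ : Fin t → Fin n₁ := fun i => Sum.elim id (fun _ => j₁) (c i) with hc₁
    obtain ⟨R₁, hdisj₁, hspan₁⟩ := hA c₁
    by_cases hR : ∃ j : Fin n₂, ∃ i, c i = Sum.inr j
    case neg =>
      refine ⟨fun i => Sum.inl '' R₁ i, ?_, fun i => ?_⟩
      · intro a b hab
        exact Set.disjoint_image_of_injective Sum.inl_injective (hdisj₁ hab)
      · cases h : c i with
        | inr j => exact absurd ⟨j, i, h⟩ hR
        | inl j =>
          have hv : (fun a => A a j) ∈ Submodule.span F ((fun j a => A a j) '' R₁ i) := by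
            simpa [hc₁, h] using hspan₁ i
          simp only [h]
          rw [Set.image_image, hcolsL]
          have hcol : (fun a => G a (Sum.inl j))
              = Sum.elim (fun b => A b j) (0 : Fin k₂ → F) := congrFun hcolsL j
          rw [hcol]
          exact span_extL A (R₁ i) _ hv
    case pos =>
      obtain ⟨j₀, -⟩ := hR
      set c₂ : Fin t → Fin n₂ := fun i => Sum.elim (fun _ => j₀) id (c i) with hc₂
      obtain ⟨R₂, hdisj₂, hspan₂⟩ := hB c₂
      refine ⟨fun i => Sum.elim (fun _ => Sum.inl '' R₁ i) (fun _ => Sum.inr '' R₂ i) (c i),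
        ?_, fun i => ?_⟩
      · intro a b hab
        cases ha : c a <;> cases hb : c b <;> simp only [ha, hb, Sum.elim_inl, Sum.elim_inr]
        · exact Set.disjoint_image_of_injective Sum.inl_injective (hdisj₁ hab)
        · rw [Set.disjoint_left]; rintro x ⟨u, -, rfl⟩ ⟨w, -, hx⟩; exact Sum.inl_ne_inr hx.symm
        · rw [Set.disjoint_left]; rintro x ⟨u, -, rfl⟩ ⟨w, -, hx⟩; exact Sum.inr_ne_inl hx.symm
        · exact Set.disjoint_image_of_injective Sum.inr_injective (hdisj₂ hab)
      · cases h : c i with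
        | inl j =>
          have hv : (fun a => A a j) ∈ Submodule.span F ((fun j a => A a j) '' R₁ i) := by
            simpa [hc₁, h] using hspan₁ i
          simp only [h, Sum.elim_inl]
          rw [Set.image_image, hcolsL]
          have hcol : (fun a => G a (Sum.inl j))
              = Sum.elim (fun b => A b j) (0 : Fin k₂ → F) := congrFun hcolsL j
          rw [hcol]
          exact span_extL A (R₁ i) _ hv
        | inr j =>
          have hv : (fun a => B a j) ∈ Submodule.span F ((fun j a => B a j) '' R₂ i) := by
            simpa [hc₂, h] using hspan₂ i
          simp only [h, Sum.elim_inr]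
          rw [Set.image_image, hcolsR]
          have hcol : (fun a => G a (Sum.inr j))
              = Sum.elim (0 : Fin k₁ → F) (fun b => B b j) := congrFun hcolsR j
          rw [hcol]
          exact span_extR B (R₂ i) _ hv
end

section
/- If G ∈ F_q^{k×n} satisfies the t-all-symbol batch property, then the matrix obtained by horizontally concatenating λ copies of G (which has λn columns) satisfies the (λt)-all-symbol batch property, for any positive integer λ. -/
open Matrix

theorem stmt3 {F : Type*} [Field F] {k n t : ℕ} (l : ℕ) (hl : 0 < l)
    (G : Matrix (Fin k) (Fin n) F) (hG : ASBatch F t G) :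
    ASBatch F (l * t) (Matrix.of fun i (p : Fin n × Fin l) => G i p.1) := by
  intro c
  set e : Fin l × Fin t ≃ Fin (l * t) := finProdFinEquiv
  choose R hdisj hspan using fun b : Fin l => hG fun s => (c (e (b, s))).1
  refine ⟨fun i => (R (e.symm i).1 (e.symm i).2) ×ˢ {(e.symm i).1}, ?_, ?_⟩
  · intro i j hij
    rw [Set.disjoint_left]
    rintro ⟨x, y⟩ hxi hxj
    simp only [Set.mem_prod, Set.mem_singleton_iff] at hxi hxj
    rcases eq_or_ne (e.symm i).1 (e.symm j).1 with hb | hb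
    · have hs : (e.symm i).2 ≠ (e.symm j).2 := by
        intro hs
        exact hij (by rw [← e.apply_symm_apply i, ← e.apply_symm_apply j,
          Prod.ext hb hs])
      have := hdisj (e.symm i).1 hs
      rw [← hb] at hxj
      exact Set.disjoint_left.mp this hxi.1 hxj.1
    · exact hb (hxi.2.symm.trans hxj.2)
  · intro i
    have key : ((fun (j : Fin n × Fin l) a => (Matrix.of fun i (p : Fin n × Fin l) => G i p.1) a j) ''
        ((R (e.symm i).1 (e.symm i).2) ×ˢ {(e.symm i).1})) =
        ((fun j a => G a j) '' R (e.symm i).1 (e.symm i).2) := by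
      ext f
      simp only [Set.mem_image, Set.mem_prod, Set.mem_singleton_iff, Prod.exists,
        Matrix.of_apply]
      constructor
      · rintro ⟨x, y, ⟨hx, rfl⟩, rfl⟩; exact ⟨x, hx, rfl⟩
      · rintro ⟨x, hx, rfl⟩; exact ⟨x, (e.symm i).1, ⟨hx, rfl⟩, rfl⟩
    rw [key]
    have := hspan (e.symm i).1 (e.symm i).2
    simpa using this
end

section
/- For any dimension k ≥ 1 and any prime power q, the minimum length n of a rank-k matrix G ∈ F_q^{k×n} satisfying the 2-all-symbol batch property equals k+1. In particular, the k×(k+1) matrix consisting of the identity matrix together with an all-ones parity column satisfies the 2-all-symbol batch property, and no rank-k matrix with n = k columns satisfies it. -/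
/-!
Asking for the same column `j` twice forces one of the two disjoint recovery sets to avoid `j`,
so the `2`-batch property says exactly that every column lies in the span of the other columns.
A rank-`k` matrix with `k` columns has linearly independent columns, so it fails this; appending
the parity column `e₀ + ⋯ + e_{k-1}` to the identity makes every column redundant.
-/

open Matrix

section BatchTwo

variable {F : Type*} [Field F] {m n : Type*} {G : Matrix m n F}

theorem asBatch_two_iff :
    ASBatch F 2 G ↔ ∀ j, (fun a => G a j) ∈ Submodule.span F ((fun j a => G a j) '' {j}ᶜ) := by
  constructor
  · intro hG j
    obtain ⟨R, hdisj, hmem⟩ := hG fun _ => j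
    have hR : ∀ i, j ∉ R i → R i ⊆ {j}ᶜ := fun i hj x hx (hxj : x = j) => hj (hxj ▸ hx)
    by_cases hj : j ∈ R 0
    · have hj' : j ∉ R 1 := Set.disjoint_left.1 (hdisj zero_ne_one) hj
      exact Submodule.span_mono (Set.image_mono (hR 1 hj')) (hmem 1)
    · exact Submodule.span_mono (Set.image_mono (hR 0 hj)) (hmem 0)
  · intro hG c
    by_cases hc : c 0 = c 1
    · refine ⟨![{c 0}, {c 0}ᶜ], ?_, ?_⟩
      · intro a b hab
        fin_cases a <;> fin_cases b <;> simp_all [disjoint_compl_left]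
      · intro i
        fin_cases i
        · exact Submodule.subset_span ⟨c 0, rfl, rfl⟩
        · simpa [← hc] using hG (c 0)
    · refine ⟨![{c 0}, {c 1}], ?_, ?_⟩
      · intro a b hab
        fin_cases a <;> fin_cases b <;> simp_all [Ne.symm hc]
      · intro i
        fin_cases i <;> exact Submodule.subset_span ⟨_, rfl, rfl⟩

theorem not_asBatch_two_of_linearIndependent [Nonempty n]
    (hG : LinearIndependent F fun j a => G a j) : ¬ ASBatch F 2 G := by
  rw [asBatch_two_iff, not_forall]
  obtain ⟨j⟩ := ‹Nonempty n›
  exact ⟨j, hG.notMem_span_image (Set.notMem_compl_iff.2 rfl)⟩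

theorem linearIndependent_cols_of_rank_eq_card [Fintype n] (hG : G.rank = Fintype.card n) :
    LinearIndependent F fun j a => G a j := by
  rw [show (fun j a => G a j) = G.col from rfl, linearIndependent_iff_card_eq_finrank_span,
    ← hG, rank_eq_finrank_span_cols, Set.finrank]

end BatchTwo

section Parity

variable {F : Type*} [Field F] {k : ℕ}

def parityMatrix (F : Type*) [Field F] (k : ℕ) : Matrix (Fin k) (Fin (k + 1)) F :=
  Matrix.of fun (i : Fin k) (j : Fin (k + 1)) =>
    if (j : ℕ) < k then (if (i : ℕ) = (j : ℕ) then (1 : F) else 0) else 1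

theorem parityMatrix_col_castSucc (i : Fin k) :
    (fun a => parityMatrix F k a i.castSucc) = Pi.single i 1 := by
  ext a
  simp [parityMatrix, Pi.single_apply, Fin.val_inj]

theorem parityMatrix_col_last :
    (fun a => parityMatrix F k a (Fin.last k)) = ∑ i, Pi.single i 1 := by
  ext a
  simp [parityMatrix]

theorem submatrix_castSucc_parityMatrix :
    (parityMatrix F k).submatrix id Fin.castSucc = 1 := by
  ext i j
  simp [parityMatrix, one_apply, Fin.val_inj]

theorem rank_parityMatrix : (parityMatrix F k).rank = k := by
  refine le_antisymm (rank_le_height _) ?_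
  calc k = (1 : Matrix (Fin k) (Fin k) F).rank := by rw [rank_one, Fintype.card_fin]
    _ ≤ (parityMatrix F k).rank := by
      rw [← submatrix_castSucc_parityMatrix]
      exact rank_submatrix_le _ _ _

theorem parityMatrix_col_mem_span_others (j : Fin (k + 1)) :
    (fun a => parityMatrix F k a j) ∈
      Submodule.span F ((fun j a => parityMatrix F k a j) '' {j}ᶜ) := by
  have hother : ∀ j', j' ≠ j →
      (fun a => parityMatrix F k a j') ∈
        Submodule.span F ((fun j a => parityMatrix F k a j) '' {j}ᶜ) :=
    fun j' hj' => Submodule.subset_span ⟨j', hj', rfl⟩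
  induction j using Fin.lastCases with
  | last =>
    rw [parityMatrix_col_last]
    refine Submodule.sum_mem _ fun i _ => ?_
    rw [← parityMatrix_col_castSucc]
    exact hother _ (Fin.castSucc_lt_last i).ne
  | cast i =>
    have hsingle : (Pi.single i 1 : Fin k → F) =
        (fun a => parityMatrix F k a (Fin.last k)) -
          ∑ i' ∈ Finset.univ.erase i, (fun a => parityMatrix F k a i'.castSucc) := by
      simp_rw [parityMatrix_col_castSucc, parityMatrix_col_last,
        ← Finset.sum_erase_add _ _ (Finset.mem_univ i), add_sub_cancel_left]
    rw [parityMatrix_col_castSucc, hsingle]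
    refine Submodule.sub_mem _ (hother _ (Fin.castSucc_lt_last i).ne') ?_
    refine Submodule.sum_mem _ fun i' hi' => hother _ ?_
    exact Fin.castSucc_injective _ |>.ne (Finset.ne_of_mem_erase hi')

theorem asBatch_two_parityMatrix : ASBatch F 2 (parityMatrix F k) :=
  asBatch_two_iff.2 parityMatrix_col_mem_span_others

end Parity

theorem stmt5_general {F : Type*} [Field F] {k : ℕ} (hk : 1 ≤ k) :
    IsLeast {n : ℕ | ∃ G : Matrix (Fin k) (Fin n) F, G.rank = k ∧ ASBatch F 2 G} (k + 1) ∧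
    ASBatch F 2 (Matrix.of fun (i : Fin k) (j : Fin (k + 1)) =>
      if (j : ℕ) < k then (if (i : ℕ) = (j : ℕ) then (1 : F) else 0) else 1) ∧
    (∀ G : Matrix (Fin k) (Fin k) F, G.rank = k → ¬ ASBatch F 2 G) := by
  have hsquare : ∀ G : Matrix (Fin k) (Fin k) F, G.rank = k → ¬ ASBatch F 2 G := fun G hG =>
    have : Nonempty (Fin k) := ⟨⟨0, hk⟩⟩
    not_asBatch_two_of_linearIndependent
      (linearIndependent_cols_of_rank_eq_card (hG.trans (Fintype.card_fin k).symm))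
  refine ⟨⟨⟨parityMatrix F k, rank_parityMatrix, asBatch_two_parityMatrix⟩, ?_⟩,
    asBatch_two_parityMatrix, hsquare⟩
  rintro n ⟨G, hG, hbatch⟩
  rcases (hG ▸ G.rank_le_width : k ≤ n).eq_or_lt with rfl | hlt
  · exact absurd hbatch (hsquare G hG)
  · exact hlt

theorem stmt5 {F : Type*} [Field F] [Fintype F] {k : ℕ} (hk : 1 ≤ k) :
    IsLeast {n : ℕ | ∃ G : Matrix (Fin k) (Fin n) F, G.rank = k ∧ ASBatch F 2 G} (k + 1) ∧
    ASBatch F 2 (Matrix.of fun (i : Fin k) (j : Fin (k + 1)) =>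
      if (j : ℕ) < k then (if (i : ℕ) = (j : ℕ) then (1 : F) else 0) else 1) ∧
    (∀ G : Matrix (Fin k) (Fin k) F, G.rank = k → ¬ ASBatch F 2 G) :=
  stmt5_general hk
end

section
/- Let t ≥ 1 and k ≥ 1. The k×n matrix G over F_q whose columns consist of ⌈t/2⌉ copies of each standard basis vector e_1,...,e_k and ⌊t/2⌋ copies of the all-ones vector (so n = k⌈t/2⌉ + ⌊t/2⌋ ≤ ⌈(k+1)t/2⌉) satisfies the t-all-symbol batch property. -/
open Matrix

namespace Stmt6

abbrev N (k t : ℕ) := Fin k × Fin ((t + 1) / 2) ⊕ Fin (t / 2)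

variable {k t : ℕ}

/-- slot value of a column. -/
def sv : N k t → ℕ
  | .inl p => p.2.1
  | .inr a => a.1

/-- the single basis column `e_q` in slot `s`. -/
def Sing (q : Fin k) (s : ℕ) : Set (N k t) := {x | ∃ s', x = Sum.inl (q, s') ∧ s'.1 = s}
/-- the all-ones column number `s`. -/
def One (s : ℕ) : Set (N k t) := {x | ∃ a, x = Sum.inr a ∧ a.1 = s}
/-- all basis columns in slot `s`. -/
def Slot (s : ℕ) : Set (N k t) := {x | ∃ p, x = Sum.inl p ∧ p.2.1 = s}
/-- all basis columns in slot `s` except `e_q`. -/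
def SlotNe (q : Fin k) (s : ℕ) : Set (N k t) := {x | ∃ p, x = Sum.inl p ∧ p.2.1 = s ∧ p.1 ≠ q}

lemma sv_Sing {q : Fin k} {s : ℕ} {x : N k t} (h : x ∈ Sing q s) : sv x = s := by
  obtain ⟨s', rfl, h⟩ := h; exact h

lemma sv_One {s : ℕ} {x : N k t} (h : x ∈ One s) : sv x = s := by
  obtain ⟨a, rfl, h⟩ := h; exact h

lemma sv_Slot {s : ℕ} {x : N k t} (h : x ∈ Slot s) : sv x = s := by
  obtain ⟨p, rfl, h⟩ := h; exact h

lemma sv_SlotNe {q : Fin k} {s : ℕ} {x : N k t} (h : x ∈ SlotNe q s) : sv x = s := by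
  obtain ⟨p, rfl, h, -⟩ := h; exact h

lemma disj_sing_one {q : Fin k} {s s' : ℕ} : Disjoint (Sing q s) (One s' : Set (N k t)) :=
  Set.disjoint_left.mpr (by rintro x ⟨u, rfl, -⟩ ⟨a, h, -⟩; simp at h)

lemma disj_slot_one {s s' : ℕ} : Disjoint (Slot s) (One s' : Set (N k t)) :=
  Set.disjoint_left.mpr (by rintro x ⟨p, rfl, -⟩ ⟨a, h, -⟩; simp at h)

lemma disj_sing_slotne {q : Fin k} {s s' : ℕ} : Disjoint (Sing q s) (SlotNe q s' : Set (N k t)) :=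
  Set.disjoint_left.mpr (by
    rintro x ⟨u, rfl, -⟩ ⟨p, h, -, hne⟩
    rw [Sum.inl.injEq] at h
    exact hne (by rw [← h]))

lemma disj_sing_sing {p q : Fin k} {s s' : ℕ} (hpq : p ≠ q) :
    Disjoint (Sing p s) (Sing q s' : Set (N k t)) :=
  Set.disjoint_left.mpr (by
    rintro x ⟨u, rfl, -⟩ ⟨u', h, -⟩
    rw [Sum.inl.injEq, Prod.mk.injEq] at h
    exact hpq h.1)

/-- predecessor in `Fin t`. -/
def prev (i : Fin t) : Fin t := ⟨i.1 - 1, lt_of_le_of_lt (Nat.sub_le _ _) i.2⟩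

open Classical in
/-- the recovery sets. -/
noncomputable def R (c : Fin t → N k t) (i : Fin t) : Set (N k t) :=
  Sum.elim
    (fun p => if i.1 % 2 = 1 ∧ (∃ s', c (prev i) = Sum.inl (p.1, s'))
      then One (i.1 / 2) ∪ SlotNe p.1 (i.1 / 2) else Sing p.1 (i.1 / 2))
    (fun _ => if (i.1 % 2 = 1 ∧ ∃ a, c (prev i) = Sum.inr a) ∨ (i.1 % 2 = 0 ∧ i.1 + 1 = t)
      then Slot (i.1 / 2) else One (i.1 / 2))
    (c i)

lemma sv_R (c : Fin t → N k t) (i : Fin t) {x : N k t} (hx : x ∈ R c i) : sv x = i.1 / 2 := by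
  rcases h : c i with p | a <;> rw [R, h] at hx <;> simp only [Sum.elim_inl, Sum.elim_inr] at hx <;>
    split_ifs at hx
  · rcases hx with hx | hx
    · exact sv_One hx
    · exact sv_SlotNe hx
  · exact sv_Sing hx
  · exact sv_Slot hx
  · exact sv_One hx

variable (F : Type*) [Field F]

/-- the columns of the matrix. -/
def colF : N k t → Fin k → F := fun j a =>
  Sum.elim (fun p => if a = p.1 then (1 : F) else 0) (fun _ => (1 : F)) j

lemma span_sing (q : Fin k) (s0 : Fin ((t + 1) / 2)) {s : ℕ} (hs : s < (t + 1) / 2) :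
    colF F (Sum.inl (q, s0) : N k t) ∈ Submodule.span F (colF F '' (Sing q s : Set (N k t))) := by
  have : colF F (Sum.inl (q, s0) : N k t) = colF F (Sum.inl (q, ⟨s, hs⟩) : N k t) := rfl
  rw [this]
  exact Submodule.subset_span ⟨_, ⟨⟨s, hs⟩, rfl, rfl⟩, rfl⟩

lemma span_one (a0 : Fin (t / 2)) {s : ℕ} (hs : s < t / 2) :
    colF F (Sum.inr a0 : N k t) ∈ Submodule.span F (colF F '' (One s : Set (N k t))) := by
  have : colF F (Sum.inr a0 : N k t) = colF F (Sum.inr ⟨s, hs⟩ : N k t) := rfl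
  rw [this]
  exact Submodule.subset_span ⟨_, ⟨⟨s, hs⟩, rfl, rfl⟩, rfl⟩

lemma span_slot (a0 : Fin (t / 2)) {s : ℕ} (hs : s < (t + 1) / 2) :
    colF F (Sum.inr a0 : N k t) ∈ Submodule.span F (colF F '' (Slot s : Set (N k t))) := by
  have he : colF F (Sum.inr a0 : N k t)
      = ∑ j : Fin k, colF F (Sum.inl (j, ⟨s, hs⟩) : N k t) := by
    funext a
    simp [colF, Finset.sum_apply, Finset.sum_ite_eq]
  rw [he]
  exact Submodule.sum_mem _ fun j _ =>
    Submodule.subset_span ⟨_, ⟨(j, ⟨s, hs⟩), rfl, rfl⟩, rfl⟩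

lemma span_ind (q : Fin k) (s0 : Fin ((t + 1) / 2)) {s : ℕ}
    (h1 : s < (t + 1) / 2) (h2 : s < t / 2) :
    colF F (Sum.inl (q, s0) : N k t) ∈
      Submodule.span F (colF F '' ((One s ∪ SlotNe q s) : Set (N k t))) := by
  have he : colF F (Sum.inl (q, s0) : N k t)
      = colF F (Sum.inr ⟨s, h2⟩ : N k t)
        - ∑ j ∈ Finset.univ.erase q, colF F (Sum.inl (j, ⟨s, h1⟩) : N k t) := by
    funext a
    simp only [colF, Sum.elim_inl, Sum.elim_inr, Pi.sub_apply, Finset.sum_apply]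
    rw [Finset.sum_ite_eq]
    by_cases h : a = q <;> simp [h]
  rw [he]
  refine sub_mem (Submodule.subset_span ⟨_, Or.inl ⟨⟨s, h2⟩, rfl, rfl⟩, rfl⟩) ?_
  refine Submodule.sum_mem _ fun j hj => Submodule.subset_span
    ⟨_, Or.inr ⟨(j, ⟨s, h1⟩), rfl, rfl, Finset.ne_of_mem_erase hj⟩, rfl⟩

lemma span_R (c : Fin t → N k t) (i : Fin t) :
    colF F (c i) ∈ Submodule.span F (colF F '' R c i) := by
  rcases h : c i with ⟨q, s0⟩ | a0 <;> rw [R, h] <;>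
      simp only [Sum.elim_inl, Sum.elim_inr] <;> split_ifs with hcond
  · obtain ⟨hodd, -⟩ := hcond
    have hi := i.2
    exact span_ind F q s0 (by omega) (by omega)
  · exact span_sing F q s0 (by have := i.2; omega)
  · exact span_slot F a0 (by have := i.2; omega)
  · have hi := i.2
    have h2 : ¬(i.1 % 2 = 0 ∧ i.1 + 1 = t) := fun h => hcond (Or.inr h)
    exact span_one F a0 (by omega)

lemma key (c : Fin t → N k t) (a b : Fin t) (ha : a.1 % 2 = 0) (hb : b.1 = a.1 + 1) :
    Disjoint (R c a) (R c b) := by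
  have hab : prev b = a := Fin.ext (by simp [prev]; omega)
  have hblt := b.2
  have hbodd : b.1 % 2 = 1 := by omega
  have hs : b.1 / 2 = a.1 / 2 := by omega
  rcases h1 : c a with ⟨q, s0⟩ | a0 <;> rcases h2 : c b with ⟨p, s1⟩ | a1 <;>
    rw [R, R, h1, h2] <;> simp only [Sum.elim_inl, Sum.elim_inr, hab, h1]
  · -- both basis requests
    rw [if_neg (fun h => by omega)]
    by_cases hpq : p = q
    · subst hpq
      rw [if_pos ⟨hbodd, ⟨s0, rfl⟩⟩, hs]
      exact Set.disjoint_union_right.mpr ⟨disj_sing_one, disj_sing_slotne⟩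
    · rw [if_neg]
      · exact disj_sing_sing fun h => hpq h.symm
      · rintro ⟨-, s', hc⟩
        rw [Sum.inl.injEq, Prod.mk.injEq] at hc
        exact hpq hc.1.symm
  · -- basis then all-ones
    rw [if_neg (fun h => by omega), if_neg]
    · exact disj_sing_one
    · rintro (⟨-, a', hc⟩ | ⟨hb0, -⟩)
      · simp at hc
      · omega
  · -- all-ones then basis
    rw [if_neg (by rintro (⟨h, -⟩ | ⟨-, hbt⟩) <;> omega), if_neg]
    · exact disj_sing_one.symm
    · rintro ⟨-, s', hc⟩
      simp at hc
  · -- both all-ones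
    rw [if_neg (by rintro (⟨h, -⟩ | ⟨-, hbt⟩) <;> omega),
      if_pos (Or.inl ⟨hbodd, ⟨a0, rfl⟩⟩)]
    exact disj_slot_one.symm

end Stmt6

theorem stmt6 {F : Type*} [Field F] {k t : ℕ} (hk : 1 ≤ k) (ht : 1 ≤ t) :
    ASBatch F t (Matrix.of fun (i : Fin k) (c : Fin k × Fin ((t + 1) / 2) ⊕ Fin (t / 2)) =>
      Sum.elim (fun p => if i = p.1 then (1 : F) else 0) (fun _ => (1 : F)) c) := by
  intro c
  refine ⟨Stmt6.R c, ?_, ?_⟩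
  · intro a b hne
    by_cases hslot : a.1 / 2 = b.1 / 2
    · have hval : a.1 ≠ b.1 := fun h => hne (Fin.ext h)
      have h2a := a.2
      have h2b := b.2
      rcases show (a.1 % 2 = 0 ∧ b.1 = a.1 + 1) ∨ (b.1 % 2 = 0 ∧ a.1 = b.1 + 1) by omega with
        ⟨h1, h2⟩ | ⟨h1, h2⟩
      · exact Stmt6.key c a b h1 h2
      · exact (Stmt6.key c b a h1 h2).symm
    · exact Set.disjoint_left.mpr fun x hxa hxb =>
        hslot ((Stmt6.sv_R c a hxa).symm.trans (Stmt6.sv_R c b hxb))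
  · intro i
    exact Stmt6.span_R F c i
end

section
/- If a matrix G ∈ F_q^{k×n} satisfies the 3-all-symbol PIR property, then it satisfies the 3-all-symbol batch property. -/
open Matrix

lemma col_mem_single {F : Type*} [Field F] {k n : ℕ} (G : Matrix (Fin k) (Fin n) F)
    (j : Fin n) :
    (fun a => G a j) ∈ Submodule.span F ((fun j a => G a j) '' ({j} : Set (Fin n))) :=
  Submodule.subset_span ⟨j, Set.mem_singleton j, rfl⟩

lemma two_avoiding {F : Type*} [Field F] {k n : ℕ} (G : Matrix (Fin k) (Fin n) F)
    (h : ASPIR F 3 G) (j x : Fin n) :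
    ∃ S1 S2 : Set (Fin n), Disjoint S1 S2 ∧ x ∉ S1 ∧ x ∉ S2 ∧
      (fun a => G a j) ∈ Submodule.span F ((fun j a => G a j) '' S1) ∧
      (fun a => G a j) ∈ Submodule.span F ((fun j a => G a j) '' S2) := by
  obtain ⟨R, hdisj, hspan⟩ := h j
  by_cases h0 : x ∈ R 0
  · exact ⟨R 1, R 2, hdisj (by decide),
      Set.disjoint_left.mp (hdisj (show (0:Fin 3) ≠ 1 by decide)) h0,
      Set.disjoint_left.mp (hdisj (show (0:Fin 3) ≠ 2 by decide)) h0,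
      hspan 1, hspan 2⟩
  by_cases h1 : x ∈ R 1
  · exact ⟨R 0, R 2, hdisj (by decide), h0,
      Set.disjoint_left.mp (hdisj (show (1:Fin 3) ≠ 2 by decide)) h1,
      hspan 0, hspan 2⟩
  · exact ⟨R 0, R 1, hdisj (by decide), h0, h1, hspan 0, hspan 1⟩

lemma pair_case {F : Type*} [Field F] {k n : ℕ} (G : Matrix (Fin k) (Fin n) F)
    (h : ASPIR F 3 G) (c : Fin 3 → Fin n) (p q r : Fin 3)
    (hpq : c p = c q) (hr : c p ≠ c r) (hperm : ∀ i : Fin 3, i = p ∨ i = q ∨ i = r)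
    (hpq' : p ≠ q) (hpr : p ≠ r) (hqr : q ≠ r) :
    Serves F G fun i => fun a => G a (c i) := by
  obtain ⟨S1, S2, hd, hx1, hx2, hs1, hs2⟩ := two_avoiding G h (c p) (c r)
  refine ⟨fun i => if i = p then S1 else if i = q then S2 else {c r}, ?_, ?_⟩
  · intro a b hab
    rcases hperm a with ha | ha | ha <;> rcases hperm b with hb | hb | hb <;>
      subst ha <;> subst hb <;>
      first
        | exact absurd rfl hab
        | simp only [if_pos rfl, if_neg hpq', if_neg hpr, if_neg hqr,
            if_neg hpq'.symm, if_neg hpr.symm, if_neg hqr.symm]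
    · exact hd
    · exact Set.disjoint_singleton_right.mpr hx1
    · exact hd.symm
    · exact Set.disjoint_singleton_right.mpr hx2
    · exact (Set.disjoint_singleton_right.mpr hx1).symm
    · exact (Set.disjoint_singleton_right.mpr hx2).symm
  · intro i
    rcases hperm i with hi | hi | hi <;> subst hi
    · simpa [if_pos rfl] using hs1
    · show (fun a => G a (c i)) ∈ _
      rw [← hpq]
      simpa [if_neg hpq'.symm, if_pos rfl] using hs2
    · simp only [if_neg hpr.symm, if_neg hqr.symm]
      exact col_mem_single G (c i)

theorem stmt8 {F : Type*} [Field F] {k n : ℕ} (G : Matrix (Fin k) (Fin n) F)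
    (h : ASPIR F 3 G) : ASBatch F 3 G := by
  intro c
  by_cases h01 : c 0 = c 1
  · by_cases h02 : c 0 = c 2
    · -- all equal
      obtain ⟨R, hd, hs⟩ := h (c 0)
      refine ⟨R, hd, fun i => ?_⟩
      have : c i = c 0 := by fin_cases i <;> simp [h01.symm, h02.symm]
      show (fun a => G a (c i)) ∈ _
      rw [this]; exact hs i
    · exact pair_case G h c 0 1 2 h01 h02 (by decide) (by decide) (by decide) (by decide)
  · by_cases h02 : c 0 = c 2
    · exact pair_case G h c 0 2 1 h02 h01 (by decide) (by decide) (by decide) (by decide)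
    · by_cases h12 : c 1 = c 2
      · exact pair_case G h c 1 2 0 h12 (fun e => h01 e.symm) (by decide)
          (by decide) (by decide) (by decide)
      · -- all distinct
        refine ⟨fun i => {c i}, ?_, fun i => col_mem_single G (c i)⟩
        intro a b hab
        refine Set.disjoint_singleton.mpr ?_
        fin_cases a <;> fin_cases b <;>
          first
            | exact absurd rfl hab
            | assumption
            | exact Ne.symm (by assumption)
end

section
/- Let k ≥ 1 and let r be the smallest integer with C(r,2) ≥ k. Let A ∈ F_q^{k×r} be a matrix whose rows are k distinct 0-1 vectors of Hamming weight 2 (viewed in F_q^r). Then the matrix G = (I_k | A) ∈ F_q^{k×(k+r)} satisfies the 3-all-symbol PIR property. -/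
open Matrix

/-!
Write `G = (1 | A)` and `e i` for the `i`-th unit vector. The parity column `inr a` of `G` equals
`∑ i, A i a • e i`, so each column indexed by the check star `{inr a} ∪ {inl i | A i a ≠ 0}` lies in
the span of the other columns of the star.

A systematic column `e i` is recovered from `{inl i}` and from the stars of the two positions
`p ≠ q` where row `i` is nonzero, with `inl i` removed. These two sets are disjoint because no
other row is nonzero at both `p` and `q` (the rows are distinct vectors of weight two).

A parity column `inr a` is recovered from itself, from `{inl i | A i a ≠ 0}`, and from everything
else: each `e i` with `A i a ≠ 0` is recovered from the star of the other nonzero position `b` of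
row `i`, and that star meets the star of `a` only in `inl i`.
-/

open Submodule

theorem Pi.mem_span_single_one_of_support_subset {R m : Type*} [Semiring R] [Finite m]
    [DecidableEq m] {x : m → R} {s : Set m} (hx : ∀ i, x i ≠ 0 → i ∈ s) :
    x ∈ span R ((fun i => Pi.single i (1 : R)) '' s) := by
  have h := (Pi.basisFun R m).mem_span_image (m := x) (s := s)
  simp only [Pi.basisFun_apply] at h
  exact h.mpr fun i hi => hx i (by simpa using hi)

theorem serves_const_three_of_mem_span_compl {F m n : Type*} [Field F] {G : Matrix m n F}
    {v : m → F} {R₀ R₁ : Set n} (h₀₁ : Disjoint R₀ R₁)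
    (h₀ : v ∈ span F (Gᵀ '' R₀)) (h₁ : v ∈ span F (Gᵀ '' R₁))
    (h₂ : v ∈ span F (Gᵀ '' (R₀ ∪ R₁)ᶜ)) :
    Serves F G fun _ : Fin 3 => v := by
  refine ⟨![R₀, R₁, (R₀ ∪ R₁)ᶜ], ?_, fun t => by fin_cases t <;> assumption⟩
  have h₀₂ : Disjoint R₀ (R₀ ∪ R₁)ᶜ := disjoint_compl_right.mono_left Set.subset_union_left
  have h₁₂ : Disjoint R₁ (R₀ ∪ R₁)ᶜ := disjoint_compl_right.mono_left Set.subset_union_right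
  intro s t hst
  fin_cases s <;> fin_cases t <;> simp_all [Disjoint.symm]

theorem eq_ite_of_ne_zero_of_eq_ite {M n : Type*} [Zero M] [One M] [DecidableEq n]
    {x : n → M} {p q a b : n} (hx : ∀ j, x j = if j = p ∨ j = q then 1 else 0) (hab : a ≠ b)
    (ha : x a ≠ 0) (hb : x b ≠ 0) (j : n) : x j = if j = a ∨ j = b then 1 else 0 := by
  have hsupp : ∀ j, x j ≠ 0 → j = p ∨ j = q := fun j hj => by
    by_contra hj'
    exact hj (by simp [hx j, hj'])
  have ha' := hsupp a ha
  have hb' := hsupp b hb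
  rw [hx j]
  congr 1
  grind

namespace Matrix

section Zero

variable {M m n : Type*} [Zero M] (A : Matrix m n M)

/-- The support of the parity check `Gᵀ (inr a) = ∑ i, A i a • Gᵀ (inl i)` of `G = fromCols 1 A`. -/
def checkStar (a : n) : Set (m ⊕ n) := insert (Sum.inr a) (Sum.inl '' {i | A i a ≠ 0})

/-- The Tanner graph of `A` has no `4`-cycle. -/
def FourCycleFree : Prop :=
  ∀ ⦃i i' a b⦄, a ≠ b → A i a ≠ 0 → A i b ≠ 0 → A i' a ≠ 0 → A i' b ≠ 0 → i = i'

theorem fourCycleFree_of_injective_of_rows_weight_two [One M] [DecidableEq n]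
    (hrows : ∀ i, ∃ a b : n, a ≠ b ∧ ∀ j, A i j = if j = a ∨ j = b then 1 else 0)
    (hinj : Function.Injective A) : FourCycleFree A := by
  intro i i' a b hab hia hib hi'a hi'b
  obtain ⟨p, q, -, hi⟩ := hrows i
  obtain ⟨p', q', -, hi'⟩ := hrows i'
  apply hinj
  ext j
  rw [eq_ite_of_ne_zero_of_eq_ite hi hab hia hib, eq_ite_of_ne_zero_of_eq_ite hi' hab hi'a hi'b]

variable {A}

theorem FourCycleFree.disjoint_checkStar_diff (hA : FourCycleFree A) {i : m} {a b : n}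
    (hab : a ≠ b) (ha : A i a ≠ 0) (hb : A i b ≠ 0) :
    Disjoint (checkStar A b \ {Sum.inl i}) (checkStar A a) := by
  rw [Set.disjoint_left]
  rintro _ ⟨rfl | ⟨i', hi'b, rfl⟩, hne⟩ (h | ⟨i'', hi''a, h⟩)
  · exact hab (Sum.inr.inj h).symm
  · exact Sum.inr_ne_inl h.symm
  · exact Sum.inl_ne_inr h
  · obtain rfl := Sum.inl.inj h
    exact hne (congrArg Sum.inl (hA hab hi''a hi'b ha hb))

end Zero

variable {F m n : Type*} [Field F] [DecidableEq m]

section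

variable (A : Matrix m n F)

@[simp]
theorem fromCols_one_transpose_inl (i : m) :
    (fromCols (1 : Matrix m m F) A)ᵀ (Sum.inl i) = Pi.single i 1 := by
  ext x
  simp [one_apply, Pi.single_apply]

@[simp]
theorem fromCols_one_transpose_inr (a : n) :
    (fromCols (1 : Matrix m m F) A)ᵀ (Sum.inr a) = Aᵀ a := by
  ext x
  simp

end

variable [Fintype m] {A : Matrix m n F}

theorem single_mem_span_checkStar_diff {i : m} {a : n} (h : A i a ≠ 0) :
    Pi.single i 1 ∈
      span F ((fromCols (1 : Matrix m m F) A)ᵀ '' (checkStar A a \ {Sum.inl i})) := by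
  set S := span F ((fromCols (1 : Matrix m m F) A)ᵀ '' (checkStar A a \ {Sum.inl i}))
  have hcol : Aᵀ a ∈ S := by
    rw [← fromCols_one_transpose_inr]
    exact subset_span ⟨Sum.inr a, ⟨.inl rfl, by simp⟩, rfl⟩
  have hrest : Aᵀ a - A i a • Pi.single i 1 ∈ S := by
    refine span_le.mpr ?_
      (Pi.mem_span_single_one_of_support_subset (s := {i' | i' ≠ i ∧ A i' a ≠ 0}) ?_)
    · rintro _ ⟨i', ⟨hi', hi'a⟩, rfl⟩
      change Pi.single i' (1 : F) ∈ S
      rw [← fromCols_one_transpose_inl A]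
      exact subset_span ⟨Sum.inl i', ⟨.inr ⟨i', hi'a, rfl⟩, by simpa using hi'⟩, rfl⟩
    · intro i' hi'
      by_cases hii' : i' = i
      · subst hii'
        simp at hi'
      · simpa [hii'] using hi'
  have := S.sub_mem hcol hrest
  rwa [sub_sub_cancel, S.smul_mem_iff h] at this

theorem FourCycleFree.serves_inl (hA : FourCycleFree A) {i : m} {p q : n} (hpq : p ≠ q)
    (hp : A i p ≠ 0) (hq : A i q ≠ 0) :
    Serves F (fromCols (1 : Matrix m m F) A) fun _ : Fin 3 =>
      (fromCols (1 : Matrix m m F) A)ᵀ (Sum.inl i) := by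
  have hunion : {Sum.inl i} ∪ checkStar A p \ {Sum.inl i} = checkStar A p :=
    Set.union_sdiff_cancel (by simpa [checkStar] using hp)
  refine serves_const_three_of_mem_span_compl (R₀ := {Sum.inl i})
    (R₁ := checkStar A p \ {Sum.inl i}) Set.disjoint_sdiff_right
    (subset_span ⟨Sum.inl i, rfl, rfl⟩) ?_ ?_
  · simpa using single_mem_span_checkStar_diff hp
  · rw [hunion, fromCols_one_transpose_inl]
    have hdisj := hA.disjoint_checkStar_diff hpq hp hq
    exact span_mono (Set.image_mono hdisj.subset_compl_right) (single_mem_span_checkStar_diff hq)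

theorem FourCycleFree.serves_inr (hA : FourCycleFree A)
    (hweight : ∀ i, ∃ a b, a ≠ b ∧ A i a ≠ 0 ∧ A i b ≠ 0) (a : n) :
    Serves F (fromCols (1 : Matrix m m F) A) fun _ : Fin 3 =>
      (fromCols (1 : Matrix m m F) A)ᵀ (Sum.inr a) := by
  have hcol : Aᵀ a ∈ span F ((fun i => Pi.single i (1 : F)) '' {i | A i a ≠ 0}) :=
    Pi.mem_span_single_one_of_support_subset fun i hi => hi
  refine serves_const_three_of_mem_span_compl (R₀ := {Sum.inr a})
    (R₁ := Sum.inl '' {i | A i a ≠ 0}) (by simp) (subset_span ⟨Sum.inr a, rfl, rfl⟩) ?_ ?_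
  · rw [fromCols_one_transpose_inr]
    refine span_mono ?_ hcol
    rintro _ ⟨i, hi, rfl⟩
    exact ⟨Sum.inl i, ⟨i, hi, rfl⟩, fromCols_one_transpose_inl A i⟩
  · rw [fromCols_one_transpose_inr, ← Set.insert_eq]
    refine span_le.mpr ?_ hcol
    rintro _ ⟨i, hia, rfl⟩
    obtain ⟨b, hba, hib⟩ : ∃ b, b ≠ a ∧ A i b ≠ 0 := by
      obtain ⟨p, q, hpq, hp, hq⟩ := hweight i
      by_cases hap : a = p
      · exact ⟨q, hap ▸ hpq.symm, hq⟩
      · exact ⟨p, Ne.symm hap, hp⟩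
    have hdisj := hA.disjoint_checkStar_diff hba.symm hia hib
    exact span_mono (Set.image_mono hdisj.subset_compl_right) (single_mem_span_checkStar_diff hib)

theorem FourCycleFree.aspir_three_fromCols_one (hA : FourCycleFree A)
    (hweight : ∀ i, ∃ a b, a ≠ b ∧ A i a ≠ 0 ∧ A i b ≠ 0) :
    ASPIR F 3 (fromCols (1 : Matrix m m F) A) := by
  rintro (i | a)
  · obtain ⟨p, q, hpq, hp, hq⟩ := hweight i
    exact hA.serves_inl hpq hp hq
  · exact hA.serves_inr hweight a

end Matrix

theorem stmt9_general {F : Type*} [Field F] {k r : ℕ}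
    (A : Matrix (Fin k) (Fin r) F)
    (hrows : ∀ i, ∃ a b : Fin r, a ≠ b ∧ ∀ j, A i j = if j = a ∨ j = b then 1 else 0)
    (hdist : Function.Injective fun i => fun j => A i j) :
    ASPIR F 3 (Matrix.fromCols (1 : Matrix (Fin k) (Fin k) F) A) := by
  have hA := Matrix.fourCycleFree_of_injective_of_rows_weight_two A hrows hdist
  refine hA.aspir_three_fromCols_one fun i => ?_
  obtain ⟨a, b, hab, hA⟩ := hrows i
  exact ⟨a, b, hab, by simp [hA a], by simp [hA b]⟩

theorem stmt9 {F : Type*} [Field F] {k r : ℕ} (hk : 1 ≤ k)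
    (A : Matrix (Fin k) (Fin r) F)
    (hrows : ∀ i, ∃ a b : Fin r, a ≠ b ∧ ∀ j, A i j = if j = a ∨ j = b then 1 else 0)
    (hdist : Function.Injective fun i => fun j => A i j)
    (hr : IsLeast {r' : ℕ | k ≤ r'.choose 2} r) :
    ASPIR F 3 (Matrix.fromCols (1 : Matrix (Fin k) (Fin k) F) A) :=
  stmt9_general A hrows hdist
end

section
/- Let C ≤ F_q^n be a linear code with generator matrix G ∈ F_q^{k×n}, and suppose the dual code C^⊥ has minimum distance d^⊥ > 1. If G satisfies the t-all-symbol PIR property, then t ≤ (n−1)/(d^⊥ − 1) + 1. -/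
open Matrix

/-!
A column `j` recovered from a set `R ∌ j` of other columns yields a dual codeword supported in
`R ∪ {j}`, so every recovery set avoiding `j` has at least `d⊥ - 1` elements. The recovery sets
of column `j` are pairwise disjoint, and at most one of them contains `j`; the remaining `t - 1`
of them are packed into the `n - 1` positions other than `j`, whence `(t - 1)(d⊥ - 1) ≤ n - 1`.
-/

theorem card_mul_add_one_le_of_pairwise_disjoint {ι α : Type*} [Fintype ι] [Fintype α]
    {R : ι → Set α} (hR : Pairwise fun a b => Disjoint (R a) (R b)) (j : α) {m : ℕ}
    (hm : ∀ i, j ∉ R i → m ≤ (R i).ncard) :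
    Fintype.card ι * m + 1 ≤ Fintype.card α + m := by
  classical
  set B := Finset.univ.filter fun i => j ∈ R i
  set A := Bᶜ
  have hB : B.card ≤ 1 :=
    Finset.card_le_one.mpr fun a ha b hb => by_contra fun hab =>
      Set.disjoint_left.mp (hR hab) (Finset.mem_filter.mp ha).2 (Finset.mem_filter.mp hb).2
  have hA : Fintype.card ι ≤ A.card + 1 := by
    rw [Finset.card_compl]
    omega
  have hunion : (⋃ i ∈ A, R i).ncard = ∑ i ∈ A, (R i).ncard := by
    rw [← Finset.set_biUnion_coe, A.finite_toSet.ncard_biUnion (fun _ _ => Set.toFinite _)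
      (fun a _ b _ hab => hR hab), finsum_mem_coe_finset]
  have hj : j ∉ ⋃ i ∈ A, R i := by simp [A, B]
  have hsum : ∑ i ∈ A, (R i).ncard + 1 ≤ Fintype.card α := by
    rw [← hunion, ← Set.ncard_insert_of_notMem hj, ← Nat.card_eq_fintype_card]
    exact Set.ncard_le_card _
  have hmA : A.card * m ≤ ∑ i ∈ A, (R i).ncard := by
    simpa using Finset.card_nsmul_le_sum A _ m fun i hi => hm i (by simpa [A, B] using hi)
  calc Fintype.card ι * m + 1 ≤ (A.card + 1) * m + 1 := by gcongr
    _ ≤ Fintype.card α + m := by rw [add_one_mul]; omega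

namespace Matrix

variable {R m n : Type*} [Fintype n]

theorem linearCombination_col [CommSemiring R] (G : Matrix m n R) (l : n →₀ R) :
    Finsupp.linearCombination R G.col l = G *ᵥ ⇑l := by
  ext a
  simp [Finsupp.linearCombination_apply, Finsupp.sum_fintype, mulVec, dotProduct,
    Finset.sum_apply, mul_comm]

theorem exists_mulVec_eq_zero_of_col_mem_span [CommRing R] [DecidableEq n] (G : Matrix m n R)
    {j : n} {S : Set n} (hj : j ∉ S) (hspan : G.col j ∈ Submodule.span R (G.col '' S)) :
    ∃ x : n → R, G *ᵥ x = 0 ∧ x j = -1 ∧ Function.support x ⊆ insert j S := by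
  obtain ⟨l, hlS, hl⟩ := (Finsupp.mem_span_image_iff_linearCombination R).mp hspan
  have hlj : l j = 0 := Finsupp.notMem_support_iff.mp fun h => hj (hlS h)
  refine ⟨⇑l - Pi.single j 1, ?_, by simp [hlj], fun i hi => ?_⟩
  · rw [mulVec_sub, mulVec_single_one, ← linearCombination_col, hl, sub_self]
  · by_cases hij : i = j
    · exact hij ▸ Set.mem_insert i S
    · have hli : l i ≠ 0 := by simpa [Pi.single_apply, hij] using hi
      exact Set.mem_insert_of_mem j (hlS (Finsupp.mem_support_iff.mpr hli))

theorem le_ncard_add_one_of_col_mem_span [CommRing R] [Nontrivial R] (G : Matrix m n R) {d : ℕ}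
    (hmin : ∀ x : n → R, G *ᵥ x = 0 → x ≠ 0 → d ≤ (Function.support x).ncard)
    {j : n} {S : Set n} (hj : j ∉ S) (hspan : G.col j ∈ Submodule.span R (G.col '' S)) :
    d ≤ S.ncard + 1 := by
  classical
  obtain ⟨x, hx, hxj, hsupp⟩ := G.exists_mulVec_eq_zero_of_col_mem_span hj hspan
  have hx0 : x ≠ 0 := fun h => by simp [h] at hxj
  calc d ≤ (Function.support x).ncard := hmin x hx hx0
    _ ≤ (insert j S).ncard := Set.ncard_le_ncard hsupp
    _ ≤ S.ncard + 1 := Set.ncard_insert_le j S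

end Matrix

theorem stmt11 {F : Type*} [Field F] {k n t d : ℕ} (G : Matrix (Fin k) (Fin n) F)
    (hd : 1 < d)
    (hex : ∃ x : Fin n → F, G.mulVec x = 0 ∧ x ≠ 0 ∧ (Function.support x).ncard = d)
    (hmin : ∀ x : Fin n → F, G.mulVec x = 0 → x ≠ 0 → d ≤ (Function.support x).ncard)
    (hpir : ASPIR F t G) :
    (t : ℝ) ≤ ((n : ℝ) - 1) / ((d : ℝ) - 1) + 1 := by
  obtain ⟨x, -, hx0, -⟩ := hex
  obtain ⟨j, -⟩ := Function.ne_iff.mp hx0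
  obtain ⟨R, hdisj, hspan⟩ := hpir j
  have hcount : t * (d - 1) + 1 ≤ n + (d - 1) := by
    simpa using card_mul_add_one_le_of_pairwise_disjoint hdisj j fun i hji =>
      Nat.sub_le_of_le_add (G.le_ncard_add_one_of_col_mem_span hmin hji (hspan i))
  have hcountR : ((t : ℝ) - 1) * ((d : ℝ) - 1) ≤ (n : ℝ) - 1 := by
    have := (Nat.cast_le (α := ℝ)).mpr hcount
    push_cast [Nat.cast_sub hd.le] at this
    linarith
  have hd1 : (0 : ℝ) < (d : ℝ) - 1 := by
    have : (1 : ℝ) < d := by exact_mod_cast hd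
    linarith
  linarith [(le_div_iff₀ hd1).mpr hcountR]
end

section
/- Let G ∈ F_q^{k×n} be a matrix in which every k columns are linearly independent (a generator matrix of an MDS code of dimension k). Then G satisfies the t-all-symbol batch property with t = ⌊(n−1)/k⌋ + 1, and does not satisfy the t'-all-symbol PIR property for any t' > ⌊(n−1)/k⌋ + 1. -/
open Matrix

/-! Any `k` columns of an MDS generator matrix are a basis of `F^k`, and fewer than `k` other
columns can never produce a given column, since together with it they are still independent. So
of `t` disjoint recovery sets for one column at most one contains it, and each of the others uses
`k` of the remaining `n - 1` columns: `(t - 1) k ≤ n - 1`. Conversely, a batch request `c` is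
served by `{c 0}` together with `⌊(n - 1) / k⌋` disjoint blocks of `k` columns avoiding `c 0`. -/

open Finset Function

theorem Fin.pairwise_disjoint_cons {α : Type*} [PartialOrder α] [OrderBot α] {n : ℕ} {a : α}
    {f : Fin n → α} (ha : ∀ i, Disjoint a (f i)) (hf : Pairwise (Disjoint on f)) :
    Pairwise (Disjoint on (Fin.cons a f : Fin (n + 1) → α)) := by
  intro i j hij
  induction i using Fin.cases with
  | zero => induction j using Fin.cases with
    | zero => exact absurd rfl hij
    | succ j => simpa [onFun] using ha j
  | succ i => induction j using Fin.cases with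
    | zero => simpa [onFun] using (ha i).symm
    | succ j => simpa [onFun] using hf fun h => hij (congrArg Fin.succ h)

namespace Finset

variable {α : Type*}

theorem exists_pairwise_disjoint_subsets_card_eq [DecidableEq α] {k : ℕ} :
    ∀ {r : ℕ} {s : Finset α}, r * k ≤ #s →
      ∃ B : Fin r → Finset α, Pairwise (Disjoint on B) ∧ ∀ i, B i ⊆ s ∧ #(B i) = k
  | 0, _, _ => ⟨Fin.elim0, fun i => i.elim0, fun i => i.elim0⟩
  | r + 1, s, hs => by
    rw [add_one_mul] at hs
    obtain ⟨b, hbs, hb⟩ := exists_subset_card_eq (s := s) (n := k) (by omega)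
    obtain ⟨B, hBdisj, hB⟩ := exists_pairwise_disjoint_subsets_card_eq (k := k) (r := r)
      (s := s \ b) (by rw [card_sdiff_of_subset hbs, hb]; omega)
    refine ⟨Fin.cons b B, Fin.pairwise_disjoint_cons
      (fun i => disjoint_of_subset_right (hB i).1 disjoint_sdiff) hBdisj, fun i => ?_⟩
    cases i using Fin.cases with
    | zero => simpa using ⟨hbs, hb⟩
    | succ i => simpa using ⟨(hB i).1.trans sdiff_subset, (hB i).2⟩

theorem card_mul_le_of_pairwiseDisjoint [DecidableEq α] {ι : Type*} {s : Finset ι}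
    {f : ι → Finset α} {t : Finset α} {k : ℕ} (hf : (s : Set ι).PairwiseDisjoint f)
    (hft : ∀ i ∈ s, f i ⊆ t) (hk : ∀ i ∈ s, k ≤ #(f i)) : #s * k ≤ #t :=
  calc #s * k = ∑ _i ∈ s, k := by rw [sum_const, smul_eq_mul]
    _ ≤ ∑ i ∈ s, #(f i) := sum_le_sum hk
    _ = #(s.biUnion f) := (card_biUnion hf).symm
    _ ≤ #t := card_le_card (biUnion_subset.2 hft)

end Finset

namespace Matrix

variable {F : Type*} [Field F] {m ι : Type*} [Fintype m]

def IsMDS (G : Matrix m ι F) : Prop :=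
  ∀ s : Finset ι, #s = Fintype.card m → LinearIndepOn F (fun j a => G a j) (s : Set ι)

variable {G : Matrix m ι F}

theorem IsMDS.span_eq_top (hG : G.IsMDS) {s : Finset ι} (hs : #s = Fintype.card m) :
    Submodule.span F ((fun j a => G a j) '' s) = ⊤ := by
  rw [Set.image_eq_range]
  exact (hG s hs).span_eq_top_of_card_eq_finrank' (by simp [hs])

theorem IsMDS.linearIndepOn_of_card_le [Fintype ι] (hG : G.IsMDS)
    (hm : Fintype.card m ≤ Fintype.card ι) {s : Finset ι} (hs : #s ≤ Fintype.card m) :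
    LinearIndepOn F (fun j a => G a j) (s : Set ι) := by
  obtain ⟨u, hsu, hu⟩ := exists_superset_card_eq hs hm
  exact (hG u hu).mono (by exact_mod_cast hsu)

theorem IsMDS.card_le_of_mem_span [Fintype ι] (hG : G.IsMDS)
    (hm : Fintype.card m ≤ Fintype.card ι) {s : Finset ι} {j : ι} (hj : j ∉ s)
    (hmem : (fun a => G a j) ∈ Submodule.span F ((fun j a => G a j) '' s)) :
    Fintype.card m ≤ #s := by
  classical
  by_contra! hlt
  have hli := hG.linearIndepOn_of_card_le hm ((s.card_insert_le j).trans hlt)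
  rw [Finset.coe_insert, linearIndepOn_insert (by simpa using hj)] at hli
  exact hli.2 hmem

theorem IsMDS.asBatch [Fintype ι] (hG : G.IsMDS) :
    ASBatch F ((Fintype.card ι - 1) / Fintype.card m + 1) G := by
  classical
  intro c
  obtain ⟨B, hBdisj, hB⟩ := exists_pairwise_disjoint_subsets_card_eq
    (s := univ.erase (c 0)) (k := Fintype.card m)
    (by simpa using Nat.div_mul_le_self (Fintype.card ι - 1) (Fintype.card m))
  refine ⟨Fin.cons {c 0} fun i => (B i : Set ι), Fin.pairwise_disjoint_cons
    (fun i => ?_) (fun i j hij => disjoint_coe.2 (hBdisj hij)), fun i => ?_⟩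
  · simpa using fun h => notMem_erase (c 0) _ ((hB i).1 h)
  · cases i using Fin.cases with
    | zero => exact Submodule.subset_span ⟨c 0, rfl, rfl⟩
    | succ i => exact (Submodule.eq_top_iff'.1 (hG.span_eq_top (hB i).2)) _

theorem IsMDS.card_mul_le_of_serves [Fintype ι] (hG : G.IsMDS)
    (hm : Fintype.card m ≤ Fintype.card ι) {t : ℕ} (j : ι)
    (h : Serves F G fun _ : Fin t => fun a => G a j) :
    (t - 1) * Fintype.card m ≤ Fintype.card ι - 1 := by
  classical
  obtain ⟨R, hdisj, hmem⟩ := h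
  have h_avoiding : t - 1 ≤ #{i | j ∉ R i} := by
    have h_containing : #{i | j ∈ R i} ≤ 1 := card_le_one.2 fun a ha b hb => by
      by_contra hab
      exact Set.disjoint_left.1 (hdisj hab) (mem_filter.1 ha).2 (mem_filter.1 hb).2
    have := card_filter_add_card_filter_not (s := univ) fun i => j ∈ R i
    rw [card_univ, Fintype.card_fin] at this
    omega
  calc (t - 1) * Fintype.card m ≤ #{i | j ∉ R i} * Fintype.card m :=
        Nat.mul_le_mul_right _ h_avoiding
    _ ≤ #(univ.erase j) :=
      card_mul_le_of_pairwiseDisjoint (fun a _ b _ hab => Set.disjoint_toFinset.2 (hdisj hab))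
        (fun i hi x hx => mem_erase.2
          ⟨fun h => (mem_filter.1 hi).2 (h ▸ Set.mem_toFinset.1 hx), mem_univ x⟩)
        (fun i hi => hG.card_le_of_mem_span hm (by simpa using (mem_filter.1 hi).2)
          (by simpa using hmem i))
    _ = Fintype.card ι - 1 := by simp

end Matrix

theorem stmt12 {F : Type*} [Field F] {k n : ℕ} (hk : 1 ≤ k) (hkn : k ≤ n)
    (G : Matrix (Fin k) (Fin n) F)
    (hMDS : ∀ s : Finset (Fin n), s.card = k →
      LinearIndependent F fun j : s => fun i => G i (j : Fin n)) :
    ASBatch F ((n - 1) / k + 1) G ∧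
    ∀ t' : ℕ, (n - 1) / k + 1 < t' → ¬ ASPIR F t' G := by
  have hG : G.IsMDS := fun s hs => hMDS s (by simpa using hs)
  refine ⟨by simpa using hG.asBatch, fun t' ht' hPIR => ?_⟩
  have hbound := hG.card_mul_le_of_serves (by simpa using hkn) ⟨0, by omega⟩ (hPIR _)
  rw [Fintype.card_fin, Fintype.card_fin] at hbound
  have h_le_div := (Nat.le_div_iff_mul_le hk).2 hbound
  omega
end

section
/- Let G ∈ F_2^{k×(2^k−1)} be a generator matrix of the binary simplex code, whose columns are exactly all nonzero vectors of F_2^k. Then for every column g, there exist 2^{k−1} pairwise disjoint recovery sets for g: the singleton {g} together with 2^{k−1}−1 disjoint pairs {u, u+g} of nonzero vectors. Hence the simplex code is a 2^{k−1}-all-symbol PIR code, and this value of t is maximal. -/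
open Matrix

/-- generator matrix of the binary simplex code: columns are all nonzero vectors of `F_2^k`. -/
def simplexG (k : ℕ) : Matrix (Fin k) {v : Fin k → ZMod 2 // v ≠ 0} (ZMod 2) :=
  Matrix.of fun i v => v.1 i

/-! The recovery sets for `g` are the cosets of `{0, g}` in `F₂^k` with `0` removed: the zero
coset gives `{g}`, and each of the other `2^(k-1) - 1` cosets is a pair `{u, u + g}`. Conversely,
over `F₂` the span of a single column `v` is `{0, v}`, so a recovery set avoiding `g` has at least
two columns; the sets being disjoint and at most one containing `g`, `2t - 1 ≤ 2^k - 1`. -/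

open Submodule

section SpanSingleton

variable {V : Type*} [AddCommGroup V] [Module (ZMod 2) V] {g : V}

theorem mem_span_singleton_zmod_two {x : V} : x ∈ (ZMod 2 ∙ g) ↔ x = 0 ∨ x = g := by
  rw [mem_span_singleton]
  constructor
  · rintro ⟨a, rfl⟩
    rcases (by decide : ∀ a : ZMod 2, a = 0 ∨ a = 1) a with rfl | rfl <;> simp
  · rintro (rfl | rfl)
    exacts [⟨0, zero_smul _ _⟩, ⟨1, one_smul _ _⟩]

theorem mk_eq_mk_span_singleton_zmod_two {x u : V} :
    (Submodule.Quotient.mk x : V ⧸ (ZMod 2 ∙ g)) = Submodule.Quotient.mk u ↔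
      x = u ∨ x = u + g := by
  rw [Submodule.Quotient.eq, mem_span_singleton_zmod_two, sub_eq_zero, sub_eq_iff_eq_add']

theorem card_quotient_span_singleton_zmod_two (hg : g ≠ 0) :
    Nat.card (V ⧸ (ZMod 2 ∙ g)) * 2 = Nat.card V := by
  have hspan : Nat.card (ZMod 2 ∙ g) = 2 := by
    rw [← Nat.card_congr (LinearEquiv.toSpanNonzeroSingleton (ZMod 2) V g hg).toEquiv,
      Nat.card_zmod]
  convert ((ZMod 2 ∙ g).toAddSubgroup.card_eq_card_quotient_mul_card_addSubgroup).symm using 2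
  exacts [rfl, hspan.symm]

theorem Set.Nontrivial.of_mem_span_zmod_two {S : Set V} (hg : g ≠ 0)
    (h : g ∈ span (ZMod 2) S) (hgS : g ∉ S) : S.Nontrivial := by
  by_contra hS
  rcases (Set.not_nontrivial_iff.1 hS).eq_empty_or_singleton with rfl | ⟨v, rfl⟩
  · simp [hg] at h
  · rcases mem_span_singleton_zmod_two.1 h with h | rfl
    exacts [hg h, hgS rfl]

def nonzeroCoset (g : V) (c : V ⧸ (ZMod 2 ∙ g)) : Set {v : V // v ≠ 0} :=
  {x | Submodule.Quotient.mk x.1 = c}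

theorem nonzeroCoset_zero (hg : g ≠ 0) : nonzeroCoset g 0 = {⟨g, hg⟩} := by
  ext ⟨x, hx⟩
  simp [nonzeroCoset, Submodule.Quotient.mk_eq_zero, mem_span_singleton_zmod_two, hx]

theorem nonzeroCoset_eq_pair (hg : g ≠ 0) {c : V ⧸ (ZMod 2 ∙ g)} (hc : c ≠ 0) :
    ∃ u v : {v : V // v ≠ 0}, u ≠ v ∧ u.1 + v.1 = g ∧ nonzeroCoset g c = {u, v} := by
  obtain ⟨u, rfl⟩ := Submodule.Quotient.mk_surjective _ c
  have hmk : (Submodule.Quotient.mk (u + g) : V ⧸ (ZMod 2 ∙ g)) = Submodule.Quotient.mk u :=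
    mk_eq_mk_span_singleton_zmod_two.2 (Or.inr rfl)
  have hu : u ≠ 0 := by rintro rfl; exact hc rfl
  have hug : u + g ≠ 0 := by intro h; rw [h] at hmk; exact hc hmk.symm
  refine ⟨⟨u, hu⟩, ⟨u + g, hug⟩, fun h => hg ?_, ?_, ?_⟩
  · simpa using congrArg Subtype.val h
  · rw [← add_assoc, ZModModule.add_self, zero_add]
  · ext ⟨x, hx⟩
    simp [nonzeroCoset, mk_eq_mk_span_singleton_zmod_two]

theorem mem_span_nonzeroCoset (hg : g ≠ 0) (c : V ⧸ (ZMod 2 ∙ g)) :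
    g ∈ span (ZMod 2) (Subtype.val '' nonzeroCoset g c) := by
  rcases eq_or_ne c 0 with rfl | hc
  · rw [nonzeroCoset_zero hg]
    exact subset_span ⟨_, rfl, rfl⟩
  · obtain ⟨u, v, -, huv, hR⟩ := nonzeroCoset_eq_pair hg hc
    rw [hR, ← huv]
    exact add_mem (subset_span ⟨u, by simp, rfl⟩) (subset_span ⟨v, by simp, rfl⟩)

theorem exists_recovery_pairs (hg : g ≠ 0) {N : ℕ} [NeZero N] (hN : Nat.card V = 2 * N) :
    ∃ R : Fin N → Set {v : V // v ≠ 0},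
      (Pairwise fun a b => Disjoint (R a) (R b)) ∧
      R 0 = {⟨g, hg⟩} ∧
      (∀ i, i ≠ 0 → ∃ u v : {v : V // v ≠ 0}, u ≠ v ∧ u.1 + v.1 = g ∧ R i = {u, v}) ∧
      ∀ i, g ∈ span (ZMod 2) (Subtype.val '' R i) := by
  classical
  have hcard : Nat.card (V ⧸ (ZMod 2 ∙ g)) = N := by
    have := card_quotient_span_singleton_zmod_two hg
    omega
  have : Finite (V ⧸ (ZMod 2 ∙ g)) := Nat.finite_of_card_ne_zero (hcard ▸ NeZero.ne N)
  let e₀ := (Finite.equivFinOfCardEq hcard).symm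
  let e := e₀.trans (Equiv.swap (e₀ 0) 0)
  have he : e 0 = 0 := Equiv.swap_apply_left _ _
  refine ⟨fun i => nonzeroCoset g (e i), fun a b hab => ?_, by simp [he, nonzeroCoset_zero hg],
    fun i hi => nonzeroCoset_eq_pair hg (he ▸ e.injective.ne hi),
    fun i => mem_span_nonzeroCoset hg _⟩
  exact Set.disjoint_left.2 fun x ha hb => e.injective.ne hab (ha.symm.trans hb)

end SpanSingleton

theorem two_mul_card_le_card_add_one {ι α : Type*} [Fintype ι] [Fintype α] (s : ι → Finset α)
    (hs : Pairwise fun i j => Disjoint (s i) (s j)) (a : α) (hne : ∀ i, (s i).Nonempty)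
    (htwo : ∀ i, a ∉ s i → 1 < (s i).card) : 2 * Fintype.card ι ≤ Fintype.card α + 1 := by
  classical
  have hterm : ∀ i, 2 ≤ (s i).card + if a ∈ s i then 1 else 0 := by
    intro i
    split_ifs with h
    · have := (hne i).card_pos
      omega
    · have := htwo i h
      omega
  have hcover : ∑ i, (s i).card ≤ Fintype.card α := by
    rw [← Finset.card_biUnion fun i _ j _ hij => hs hij]
    exact Finset.card_le_univ _
  have hhit : ∑ i, (if a ∈ s i then 1 else 0) ≤ 1 := by
    rw [← Finset.card_filter, Finset.card_le_one]
    intro i hi j hj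
    by_contra hij
    exact Finset.disjoint_left.1 (hs hij) (Finset.mem_filter.1 hi).2 (Finset.mem_filter.1 hj).2
  calc 2 * Fintype.card ι = ∑ _i : ι, 2 := by simp [mul_comm]
    _ ≤ ∑ i, ((s i).card + if a ∈ s i then 1 else 0) := Finset.sum_le_sum fun i _ => hterm i
    _ ≤ Fintype.card α + 1 := by
      rw [Finset.sum_add_distrib]
      exact add_le_add hcover hhit

theorem ASPIR.two_mul_le_card_add_one {m n : Type*} [Fintype n] {G : Matrix m n (ZMod 2)}
    {t : ℕ} (h : ASPIR (ZMod 2) t G) (hG : Function.Injective fun j a => G a j) (j : n)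
    (hj : (fun a => G a j) ≠ 0) : 2 * t ≤ Fintype.card n + 1 := by
  classical
  obtain ⟨R, hdisj, hspan⟩ := h j
  have hne (i) : (R i).Nonempty := by
    by_contra hR
    rw [Set.not_nonempty_iff_eq_empty] at hR
    simpa [hR, hj] using hspan i
  have hnontriv (i) (hi : j ∉ R i) : (R i).Nontrivial :=
    Set.nontrivial_of_image _ _ <| .of_mem_span_zmod_two hj (hspan i) (hG.mem_set_image.not.2 hi)
  simpa using two_mul_card_le_card_add_one (fun i => (R i).toFinset)
    (fun a b hab => Set.disjoint_toFinset.2 (hdisj hab)) j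
    (fun i => Set.toFinset_nonempty.2 (hne i))
    fun i hi => Finset.one_lt_card_iff_nontrivial.2 <|
      Set.toFinset_nontrivial.2 (hnontriv i (by simpa using hi))

theorem stmt13 {k : ℕ} (hk : 1 ≤ k) :
    (∀ g : {v : Fin k → ZMod 2 // v ≠ 0},
      ∃ R : Fin (2 ^ (k - 1)) → Set {v : Fin k → ZMod 2 // v ≠ 0},
        (Pairwise fun a b => Disjoint (R a) (R b)) ∧
        R 0 = {g} ∧
        (∀ i, i ≠ 0 → ∃ u v : {v : Fin k → ZMod 2 // v ≠ 0},
          u ≠ v ∧ u.1 + v.1 = g.1 ∧ R i = {u, v}) ∧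
        ∀ i, g.1 ∈ Submodule.span (ZMod 2)
          ((fun j a => simplexG k a j) '' R i)) ∧
    ASPIR (ZMod 2) (2 ^ (k - 1)) (simplexG k) ∧
    ∀ t : ℕ, ASPIR (ZMod 2) t (simplexG k) → t ≤ 2 ^ (k - 1) := by
  have hpow : 2 ^ k = 2 * 2 ^ (k - 1) := by
    rw [← pow_succ', Nat.sub_add_cancel hk]
  have recovery (g : {v : Fin k → ZMod 2 // v ≠ 0}) :=
    exists_recovery_pairs g.2 (N := 2 ^ (k - 1)) (by simp [hpow])
  refine ⟨recovery, fun j => ?_, fun t ht => ?_⟩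
  · obtain ⟨R, hdisj, -, -, hspan⟩ := recovery j
    exact ⟨R, hdisj, hspan⟩
  · have : NeZero k := ⟨by omega⟩
    have := ht.two_mul_le_card_add_one Subtype.val_injective ⟨1, one_ne_zero⟩ one_ne_zero
    simp only [Fintype.card_subtype_compl, Fintype.card_unique, Fintype.card_pi, Finset.prod_const,
      Finset.card_univ, Fintype.card_fin, ZMod.card] at this
    omega
end

section
/- Suppose that the minimum length of a (k+1)-dimensional t-all-symbol batch code over F_q is exactly one more than the minimum length for dimension k, i.e., ASB(k+1,t,q) = ASB(k,t,q) + 1. Then every rank-(k+1) matrix G ∈ F_q^{(k+1)×n} with n = ASB(k+1,t,q) satisfying the t-all-symbol batch property has pairwise distinct columns. -/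
/-!
If `G` has two equal columns `v`, choose a rank-`k` matrix `P` with `P v = 0`, i.e. a projection
of `F^(k+1)` onto `F^k` along a line through `v`. Multiplying by `P` maps recovery sets to recovery
sets and keeps full row rank, and the two repeated columns of `P * G` vanish, so they can be
deleted. This leaves a `k`-dimensional `t`-all-symbol batch code of length `N - 1`, contradicting
the minimality of `N`.
-/

open Matrix

section

open Module Submodule

variable {F : Type*} [Field F] {m n n' ι : Type*}

theorem Matrix.col_mul [Fintype m] {l : Type*} (P : Matrix l m F) (G : Matrix m n F) (j : n) :
    (P * G).col j = P *ᵥ G.col j :=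
  rfl

theorem Serves.mul_left [Fintype m] {l : Type*} {G : Matrix m n F} {v : ι → m → F}
    (P : Matrix l m F) (h : Serves F G v) : Serves F (P * G) fun i => P *ᵥ v i := by
  obtain ⟨R, hdisj, hspan⟩ := h
  refine ⟨R, hdisj, fun i => ?_⟩
  have hmap := mem_map_of_mem (f := P.mulVecLin) (hspan i)
  rwa [← span_image, Set.image_image] at hmap

theorem ASBatch.mul_left [Fintype m] {l : Type*} {t : ℕ} {G : Matrix m n F}
    (P : Matrix l m F) (h : ASBatch F t G) : ASBatch F t (P * G) :=
  fun c => (h c).mul_left P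

section Puncture

variable {G : Matrix m n F} {f : n' → n} (hf : ∀ j, G.col j ≠ 0 → j ∈ Set.range f)
include hf

theorem col_mem_span_col_submatrix {s : Set n} {j : n} (hj : j ∈ s) :
    G.col j ∈ span F ((G.submatrix id f).col '' (f ⁻¹' s)) := by
  by_cases h0 : G.col j = 0
  · rw [h0]
    exact zero_mem _
  · obtain ⟨j', rfl⟩ := hf j h0
    exact subset_span ⟨j', hj, rfl⟩

theorem Serves.submatrix_id {v : ι → m → F} (h : Serves F G v) :
    Serves F (G.submatrix id f) v := by
  obtain ⟨R, hdisj, hspan⟩ := h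
  refine ⟨fun i => f ⁻¹' R i, fun a b hab => (hdisj hab).preimage f, fun i => ?_⟩
  refine span_le.2 ?_ (hspan i)
  rintro _ ⟨j, hj, rfl⟩
  exact col_mem_span_col_submatrix hf hj

theorem ASBatch.submatrix_id {t : ℕ} (h : ASBatch F t G) : ASBatch F t (G.submatrix id f) :=
  fun c => (h (f ∘ c)).submatrix_id hf

theorem Matrix.rank_submatrix_id [Fintype n] [Fintype n'] : (G.submatrix id f).rank = G.rank := by
  suffices span F (Set.range (G.submatrix id f).col) = span F (Set.range G.col) by
    rw [rank_eq_finrank_span_cols, rank_eq_finrank_span_cols, this]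
  apply le_antisymm
  · refine span_mono ?_
    rintro _ ⟨j, rfl⟩
    exact ⟨f j, rfl⟩
  · refine span_le.2 ?_
    rintro _ ⟨j, rfl⟩
    simpa using col_mem_span_col_submatrix hf (Set.mem_univ j)

end Puncture

theorem Matrix.rank_mul_of_rank_eq_card [Fintype m] [Fintype n] {l : Type*} (P : Matrix l m F)
    {G : Matrix m n F} (hG : G.rank = Fintype.card m) : (P * G).rank = P.rank := by
  have hrange : LinearMap.range G.mulVecLin = ⊤ :=
    eq_top_of_finrank_eq (by rw [← rank, hG, finrank_fintype_fun_eq_card])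
  rw [rank, rank, mulVecLin_mul, LinearMap.range_comp, hrange, Submodule.map_top]

theorem exists_rank_eq_mulVec_eq_zero {k : ℕ} (v : Fin (k + 1) → F) :
    ∃ P : Matrix (Fin k) (Fin (k + 1)) F, P.rank = k ∧ P *ᵥ v = 0 := by
  obtain ⟨w, hw, hvw⟩ : ∃ w : Fin (k + 1) → F, w ≠ 0 ∧ v ∈ span F {w} := by
    by_cases hv : v = 0
    · exact ⟨Pi.single 0 1, by simp, hv ▸ zero_mem _⟩
    · exact ⟨v, hv, mem_span_singleton_self v⟩
  have hdim : finrank F ((Fin (k + 1) → F) ⧸ span F {w}) = finrank F (Fin k → F) := by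
    have := (span F {w}).finrank_quotient_add_finrank
    rw [finrank_span_singleton hw, finrank_fin_fun] at this
    rw [finrank_fin_fun]
    omega
  let π := (LinearEquiv.ofFinrankEq _ _ hdim).toLinearMap ∘ₗ (span F {w}).mkQ
  have hπ : Function.Surjective π :=
    (LinearEquiv.ofFinrankEq _ _ hdim).surjective.comp (span F {w}).mkQ_surjective
  refine ⟨LinearMap.toMatrix' π, ?_, ?_⟩
  · rw [rank, ← toLin'_apply', toLin'_toMatrix', LinearMap.range_eq_top.2 hπ, finrank_top,
      finrank_fin_fun]
  · rw [LinearMap.toMatrix'_mulVec, LinearMap.comp_apply, mkQ_apply,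
      (Quotient.mk_eq_zero _).2 hvw, map_zero]

end

theorem stmt17_general {F : Type*} [Field F] {k t N : ℕ}
    (h2 : IsLeast {n : ℕ | ∃ G : Matrix (Fin k) (Fin n) F,
        G.rank = k ∧ ASBatch F t G} N) :
    ∀ G : Matrix (Fin (k + 1)) (Fin (N + 1)) F, G.rank = k + 1 → ASBatch F t G →
      Function.Injective fun j : Fin (N + 1) => fun i => G i j := by
  intro G hrank hbatch j₁ j₂ hcol
  by_contra hne
  have hcol' : G.col j₁ = G.col j₂ := hcol
  obtain ⟨P, hP, hPv⟩ := exists_rank_eq_mulVec_eq_zero (G.col j₁)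
  let S : Finset (Fin (N + 1)) := {j₁, j₂}ᶜ
  have hS : Fintype.card S = N - 1 := by
    rw [Fintype.card_coe, Finset.card_compl, Finset.card_pair hne, Fintype.card_fin]
    omega
  let e : Fin (N - 1) ≃ S := (Fintype.equivFinOfCardEq hS).symm
  have hf : ∀ j, (P * G).col j ≠ 0 → j ∈ Set.range (Subtype.val ∘ e) := by
    intro j hj
    have hjS : j ∈ S := by
      by_contra hjS
      obtain rfl | rfl : j = j₁ ∨ j = j₂ := by simpa [S, or_iff_not_imp_left] using hjS
      · exact hj (by rw [col_mul, hPv])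
      · exact hj (by rw [col_mul, ← hcol', hPv])
    exact ⟨e.symm ⟨j, hjS⟩, by simp⟩
  have hPG : (P * G).rank = k := by
    rw [rank_mul_of_rank_eq_card P (by rw [hrank, Fintype.card_fin]), hP]
  have hle : N ≤ N - 1 := h2.2 ⟨(P * G).submatrix id (Subtype.val ∘ e),
    (rank_submatrix_id hf).trans hPG, (hbatch.mul_left P).submatrix_id hf⟩
  have hpair : 2 ≤ N + 1 := by
    simpa [Finset.card_pair hne] using Finset.card_le_univ {j₁, j₂}
  omega

theorem stmt17 {F : Type*} [Field F] {k t N : ℕ}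
    (h1 : IsLeast {n : ℕ | ∃ G : Matrix (Fin (k + 1)) (Fin n) F,
        G.rank = k + 1 ∧ ASBatch F t G} (N + 1))
    (h2 : IsLeast {n : ℕ | ∃ G : Matrix (Fin k) (Fin n) F,
        G.rank = k ∧ ASBatch F t G} N) :
    ∀ G : Matrix (Fin (k + 1)) (Fin (N + 1)) F, G.rank = k + 1 → ASBatch F t G →
      Function.Injective fun j : Fin (N + 1) => fun i => G i j :=
  stmt17_general h2
end

section
/- Let G ∈ F_2^{k×(2^k−1)} be the generator matrix of the binary simplex code whose columns are all nonzero vectors of F_2^k. If the simplex code can serve every multiset of 2^{k−1} standard basis vectors (the 2^{k−1}-batch property with respect to a systematic generator matrix), then for any linearly independent vectors g_1,...,g_ℓ ∈ F_2^k and any positive integers t_1,...,t_ℓ with t_1+⋯+t_ℓ = 2^{k−1}, the matrix G can serve the multiset consisting of t_i copies of g_i for each i. -/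
open Matrix

/-!
A linear automorphism `f` of `F₂^k` permutes its nonzero vectors, i.e. the columns of `simplexG k`,
so recovery sets for `v` are carried to recovery sets for `f ∘ v`. Extending `g₁, …, g_ℓ` to a
basis gives an `f` sending standard basis vectors `e_{σ i}` to `g i`, so serving the multiset of
the `g i` reduces to serving a multiset of `2^(k-1)` standard basis vectors.
-/

section Serves

variable {F : Type*} [Field F] {m n n' ι ι' : Type*}

theorem Serves.comp {G : Matrix m n F} {v : ι → m → F} (h : Serves F G v) {e : ι' → ι}
    (he : Function.Injective e) : Serves F G (v ∘ e) := by
  obtain ⟨R, hdisj, hspan⟩ := h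
  exact ⟨R ∘ e, fun a b hab => hdisj (he.ne hab), fun i => hspan (e i)⟩

theorem Serves.map_of_col {G : Matrix m n F} {G' : Matrix m n' F} {v : ι → m → F}
    (h : Serves F G v) (f : (m → F) →ₗ[F] (m → F)) {π : n → n'} (hπ : Function.Injective π)
    (hcol : ∀ j, G'ᵀ (π j) = f (Gᵀ j)) : Serves F G' (f ∘ v) := by
  obtain ⟨R, hdisj, hspan⟩ := h
  refine ⟨fun i => π '' R i, fun a b hab => (Set.disjoint_image_iff hπ).2 (hdisj hab), fun i => ?_⟩
  have hcols : (fun j a => G' a j) '' (π '' R i) = f '' ((fun j a => G a j) '' R i) := by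
    simp only [Set.image_image]
    exact Set.image_congr fun j _ => hcol j
  rw [hcols, Submodule.span_image]
  exact Submodule.mem_map_of_mem (hspan i)

end Serves

theorem Serves.simplexG_map {k : ℕ} {ι : Type*} {v : ι → Fin k → ZMod 2}
    (h : Serves (ZMod 2) (simplexG k) v) (f : (Fin k → ZMod 2) ≃ₗ[ZMod 2] (Fin k → ZMod 2)) :
    Serves (ZMod 2) (simplexG k) (f ∘ v) :=
  h.map_of_col f.toLinearMap (π := fun u => ⟨f u, f.map_ne_zero_iff.2 u.2⟩)
    (fun _ _ huv => Subtype.ext (f.injective (congrArg Subtype.val huv))) fun _ => rfl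

theorem Module.Basis.exists_linearEquiv_apply_eq {K V κ ι : Type*} [DivisionRing K]
    [AddCommGroup V] [Module K V] (b : Basis κ K V) {g : ι → V} (hg : LinearIndependent K g) :
    ∃ (σ : ι → κ) (f : V ≃ₗ[K] V), ∀ i, f (b (σ i)) = g i := by
  have hrange := hg.linearIndepOn_id
  let B := Basis.extend hrange
  let τ := B.indexEquiv b
  refine ⟨fun i => τ ⟨g i, Basis.subset_extend hrange (Set.mem_range_self i)⟩,
    b.equiv B τ.symm, fun i => ?_⟩
  rw [Basis.equiv_apply, Equiv.symm_apply_apply, Basis.extend_apply_self]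

theorem stmt19_general {k : ℕ}
    (hbatch : ∀ c : Fin (2 ^ (k - 1)) → Fin k,
      Serves (ZMod 2) (simplexG k) fun i => Pi.single (c i) 1) :
    ∀ (l : ℕ) (g : Fin l → (Fin k → ZMod 2)) (tt : Fin l → ℕ),
      LinearIndependent (ZMod 2) g → (∀ i, 0 < tt i) → (∑ i, tt i) = 2 ^ (k - 1) →
      Serves (ZMod 2) (simplexG k) fun p : (Σ i : Fin l, Fin (tt i)) => g p.1 := by
  intro l g tt hg _ hsum
  obtain ⟨σ, f, hf⟩ := (Pi.basisFun (ZMod 2) (Fin k)).exists_linearEquiv_apply_eq hg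
  let E : (Σ i : Fin l, Fin (tt i)) ≃ Fin (2 ^ (k - 1)) :=
    Fintype.equivFinOfCardEq (by simp [Fintype.card_sigma, hsum])
  have hserve := ((hbatch fun j => σ (E.symm j).1).simplexG_map f).comp E.injective
  convert hserve using 2 with p
  simp [← hf]

theorem stmt19 {k : ℕ} (hk : 1 ≤ k)
    (hbatch : ∀ c : Fin (2 ^ (k - 1)) → Fin k,
      Serves (ZMod 2) (simplexG k) fun i => Pi.single (c i) 1) :
    ∀ (l : ℕ) (g : Fin l → (Fin k → ZMod 2)) (tt : Fin l → ℕ),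
      LinearIndependent (ZMod 2) g → (∀ i, 0 < tt i) → (∑ i, tt i) = 2 ^ (k - 1) →
      Serves (ZMod 2) (simplexG k) fun p : (Σ i : Fin l, Fin (tt i)) => g p.1 :=
  stmt19_general hbatch
end
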